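/- Let A be a noetherian ring complete with respect to an ideal I, S a profinite set, and M a finitely generated A-module. Then the natural map C(S,A) ⊗_A M → C(S,M) is an isomorphism. -/

import Mathlib

/-!
Choose a presentation `(Fin r → A) → (Fin k → A) → M → 0`. Tensoring it with `C(S, A)` is right
exact, and on finite free modules the natural map is the evident isomorphism, so by the five lemma
it suffices that `C(S, -)` carries the presentation to an exact sequence: a continuous map
`S → M` with values in the image of a linear map `π : A^r → M` must lift continuously along `π`.
Such a lift is built by successive approximation. Modulo the open submodule `I ^ n • M` a
continuous map is locally constant, so it lifts there; by Artin–Rees the correction at stage `n`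
can be taken in `I ^ n • A^r`, so the corrections converge because `A` is complete, and the limit
is a lift because `M` is `I`-adically Hausdorff (Krull's intersection theorem).
-/

open TensorProduct

/-- The natural `A`-linear map `C(S,A) ⊗_A M → C(S,M)`, `f ⊗ m ↦ (s ↦ f(s) • m)`. -/
noncomputable def cTensorMap (S : Type*) [TopologicalSpace S]
    (A : Type*) [CommRing A] [TopologicalSpace A] [IsTopologicalRing A]
    (M : Type*) [AddCommGroup M] [Module A M] [TopologicalSpace M]
    [IsTopologicalAddGroup M] [ContinuousSMul A M] :
    TensorProduct A C(S, A) M →ₗ[A] C(S, M) :=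
  TensorProduct.lift (LinearMap.mk₂ A
    (fun f m => ⟨fun s => f s • m, (map_continuous f).smul continuous_const⟩)
    (by intro f g m; ext s; simp [add_smul])
    (by intro c f m; ext s; simp [mul_smul])
    (by intro f m n; ext s; simp [smul_add])
    (by intro c f m; ext s; simp [smul_comm c]))

open Filter Topology

theorem Submodule.mem_smul_top_pi_iff {A ι : Type*} [CommSemiring A] [Finite ι] {M : ι → Type*}
    [∀ i, AddCommMonoid (M i)] [∀ i, Module A (M i)] (I : Ideal A) (x : ∀ i, M i) :
    x ∈ I • (⊤ : Submodule A (∀ i, M i)) ↔ ∀ i, x i ∈ I • (⊤ : Submodule A (M i)) := by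
  refine ⟨fun hx i => smul_top_le_comap_smul_top I (LinearMap.proj i) hx, fun hx => ?_⟩
  cases nonempty_fintype ι
  classical
  rw [← Finset.univ_sum_single x]
  exact sum_mem fun i _ => smul_top_le_comap_smul_top I (LinearMap.single A M i) (hx i)

section Pi

variable {A ι : Type*} [CommRing A] [Finite ι] {M : ι → Type*} [∀ i, AddCommGroup (M i)]
  [∀ i, Module A (M i)] (I : Ideal A)

instance IsPrecomplete.pi [∀ i, IsPrecomplete I (M i)] : IsPrecomplete I (∀ i, M i) where
  prec' f hf := by
    choose L hL using fun i => IsPrecomplete.prec (I := I) inferInstance (f := fun n => f n i)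
      fun hmn => SModEq.sub_mem.mpr
        ((Submodule.mem_smul_top_pi_iff _ _).mp (SModEq.sub_mem.mp (hf hmn)) i)
    exact ⟨L, fun n => SModEq.sub_mem.mpr
      ((Submodule.mem_smul_top_pi_iff _ _).mpr fun i => SModEq.sub_mem.mp (hL i n))⟩

theorem hasBasis_nhds_zero_pi_smul_top [∀ i, TopologicalSpace (M i)]
    (h : ∀ i, (𝓝 (0 : M i)).HasBasis (fun _ : ℕ => True)
      fun n => ((I ^ n • ⊤ : Submodule A (M i)) : Set (M i))) :
    (𝓝 (0 : ∀ i, M i)).HasBasis (fun _ : ℕ => True)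
      fun n => ((I ^ n • ⊤ : Submodule A (∀ i, M i)) : Set (∀ i, M i)) := by
  cases nonempty_fintype ι
  rw [nhds_pi]
  refine (Filter.hasBasis_pi_same_index h fun J k _ _ => ?_).to_hasBasis ?_ ?_
  · exact ⟨Finset.univ.sup k, trivial, fun i _ => Submodule.smul_mono_left
      (Ideal.pow_le_pow_right (Finset.le_sup (Finset.mem_univ i)))⟩
  · rintro ⟨J, n⟩ -
    exact ⟨n, trivial, fun x hx i _ => (Submodule.mem_smul_top_pi_iff _ x).mp hx i⟩
  · intro n _
    exact ⟨⟨Set.univ, n⟩, ⟨Set.finite_univ, trivial⟩,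
      fun x hx => (Submodule.mem_smul_top_pi_iff _ x).mpr fun i => hx i (Set.mem_univ i)⟩

end Pi

theorem IsAdic.hasBasis_nhds_zero_smul_top {A : Type*} [CommRing A] [TopologicalSpace A]
    {I : Ideal A} (hA : IsAdic I) :
    (𝓝 (0 : A)).HasBasis (fun _ : ℕ => True) fun n => ((I ^ n • ⊤ : Submodule A A) : Set A) := by
  subst hA
  simpa only [smul_eq_mul, Ideal.mul_top] using I.hasBasis_nhds_zero_adic

theorem continuous_of_forall_sub_mem {S M κ : Type*} [TopologicalSpace S] [AddCommGroup M]
    [TopologicalSpace M] [IsTopologicalAddGroup M] {p : κ → Prop} {U : κ → AddSubgroup M}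
    (hU : (𝓝 (0 : M)).HasBasis p fun i => (U i : Set M)) {u : κ → C(S, M)} {g : S → M}
    (h : ∀ i, p i → ∀ s, g s - u i s ∈ U i) : Continuous g := by
  refine continuous_iff_continuousAt.mpr fun s₀ => ?_
  rw [ContinuousAt, ← tendsto_sub_nhds_zero_iff, hU.tendsto_right_iff]
  intro i hi
  have hu := (u i).continuous.continuousAt (x := s₀)
  rw [ContinuousAt, ← tendsto_sub_nhds_zero_iff, hU.tendsto_right_iff] at hu
  filter_upwards [hu i hi] with s hs
  have key := (U i).sub_mem ((U i).add_mem (h i hi s) hs) (h i hi s₀)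
  rwa [show g s - u i s + (u i s - u i s₀) - (g s₀ - u i s₀) = g s - g s₀ by abel] at key

theorem exists_continuous_adic_limit {A S P : Type*} [CommRing A] (I : Ideal A)
    [TopologicalSpace S] [AddCommGroup P] [Module A P] [IsPrecomplete I P] [TopologicalSpace P]
    [IsTopologicalAddGroup P]
    (hP : (𝓝 (0 : P)).HasBasis (fun _ : ℕ => True) fun n => ((I ^ n • ⊤ : Submodule A P) : Set P))
    (u : ℕ → C(S, P)) (hu : ∀ n s, u (n + 1) s - u n s ∈ (I ^ n • ⊤ : Submodule A P)) :
    ∃ g : C(S, P), ∀ n s, g s - u n s ∈ (I ^ n • ⊤ : Submodule A P) := by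
  have hlim : ∀ s, ∃ L, ∀ n, L - u n s ∈ (I ^ n • ⊤ : Submodule A P) := by
    intro s
    obtain ⟨L, hL⟩ := IsPrecomplete.prec (I := I) inferInstance
      ((AdicCompletion.isAdicCauchy_iff I P fun n => u n s).mpr fun n =>
        SModEq.sub_mem.mpr (by simpa using neg_mem (hu n s)))
    exact ⟨L, fun n => SModEq.sub_mem.mp (hL n).symm⟩
  choose g hg using hlim
  exact ⟨⟨g, continuous_of_forall_sub_mem (U := fun n => (I ^ n • ⊤ : Submodule A P).toAddSubgroup)
    hP fun n _ s => hg s n⟩, fun n s => hg s n⟩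

theorem ContinuousMap.exists_lift_modulo_of_isOpen {S M P : Type*} [TopologicalSpace S]
    [AddCommGroup M] [TopologicalSpace M] [ContinuousAdd M] [TopologicalSpace P] [Nonempty P]
    {U : AddSubgroup M} (hU : IsOpen (U : Set M)) (ψ : P → M) {T : Set P} (d : C(S, M))
    (hd : ∀ s, d s ∈ ψ '' T) : ∃ v : C(S, P), ∀ s, v s ∈ T ∧ d s - ψ (v s) ∈ U := by
  have := QuotientAddGroup.discreteTopology hU
  let lift : M ⧸ U → P := fun q => Classical.epsilon fun a => a ∈ T ∧ (ψ a : M ⧸ U) = q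
  have hd_mod : IsLocallyConstant fun s => (d s : M ⧸ U) :=
    (IsLocallyConstant.iff_continuous _).mpr (QuotientAddGroup.continuous_mk.comp d.continuous)
  refine ⟨⟨_, (hd_mod.comp lift).continuous⟩, fun s => ?_⟩
  obtain ⟨a, ha, hψa⟩ := hd s
  have hlift := Classical.epsilon_spec (p := fun a => a ∈ T ∧ (ψ a : M ⧸ U) = d s)
    ⟨a, ha, by rw [hψa]⟩
  exact ⟨hlift.1, by simpa [neg_add_eq_sub] using QuotientAddGroup.eq.mp hlift.2⟩

theorem Ideal.exists_pow_add_smul_top_inf_le {A M : Type*} [CommRing A] [IsNoetherianRing A]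
    [AddCommGroup M] [Module A M] [Module.Finite A M] (I : Ideal A) (N : Submodule A M) :
    ∃ c, ∀ n, I ^ (n + c) • ⊤ ⊓ N ≤ I ^ n • N := by
  obtain ⟨c, hc⟩ := I.exists_pow_inf_eq_pow_smul N
  refine ⟨c, fun n => ?_⟩
  rw [hc (n + c) (Nat.le_add_left c n), Nat.add_sub_cancel]
  exact Submodule.smul_mono le_rfl inf_le_right

theorem exists_continuous_lift_step {A S M P : Type*} [CommRing A] {I : Ideal A}
    [TopologicalSpace S] [AddCommGroup M] [Module A M] [TopologicalSpace M]
    [IsTopologicalAddGroup M]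
    (hM : (𝓝 (0 : M)).HasBasis (fun _ : ℕ => True) fun n => ((I ^ n • ⊤ : Submodule A M) : Set M))
    [AddCommGroup P] [Module A P] [TopologicalSpace P] (π : P →ₗ[A] M) {c : ℕ}
    (hc : ∀ n, I ^ (n + c) • ⊤ ⊓ LinearMap.range π ≤ I ^ n • LinearMap.range π)
    {n : ℕ} (d : C(S, M)) (hd : ∀ s, d s ∈ I ^ n • LinearMap.range π) :
    ∃ v : C(S, P), ∀ s, v s ∈ (I ^ n • ⊤ : Submodule A P) ∧
      d s - π (v s) ∈ I ^ (n + 1) • LinearMap.range π := by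
  have hU := AddSubgroup.isOpen_of_mem_nhds (I ^ (n + 1 + c) • ⊤ : Submodule A M).toAddSubgroup
    (hM.mem_of_mem trivial)
  have hd_lift : ∀ s, d s ∈ π '' (I ^ n • ⊤ : Submodule A P) := by
    intro s
    rw [← Submodule.map_coe, Submodule.map_smul'', Submodule.map_top]
    exact hd s
  obtain ⟨v, hv⟩ := ContinuousMap.exists_lift_modulo_of_isOpen hU π d hd_lift
  refine ⟨v, fun s => ⟨(hv s).1, hc (n + 1) ⟨(hv s).2, ?_⟩⟩⟩
  exact sub_mem (Submodule.smul_le_right (hd s)) (LinearMap.mem_range_self π _)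

theorem exists_continuous_lift {A ι S M : Type*} [CommRing A] [IsNoetherianRing A]
    [TopologicalSpace A] [IsTopologicalRing A] {I : Ideal A} [IsAdicComplete I A] (hA : IsAdic I)
    [Finite ι] [TopologicalSpace S] [AddCommGroup M] [Module A M] [Module.Finite A M]
    [TopologicalSpace M] [IsTopologicalAddGroup M] [ContinuousSMul A M]
    (hM : (𝓝 (0 : M)).HasBasis (fun _ : ℕ => True) fun n => ((I ^ n • ⊤ : Submodule A M) : Set M))
    (π : (ι → A) →ₗ[A] M) (f : C(S, M)) (hf : ∀ s, f s ∈ LinearMap.range π) :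
    ∃ g : C(S, ι → A), ∀ s, π (g s) = f s := by
  have : IsHausdorff I M := .of_le_jacobson I M (IsAdicComplete.le_jacobson_bot I)
  obtain ⟨c, hc⟩ := I.exists_pow_add_smul_top_inf_le (LinearMap.range π)
  have step : ∀ n (u : C(S, ι → A)), (∀ s, f s - π (u s) ∈ I ^ n • LinearMap.range π) →
      ∃ w : C(S, ι → A), (∀ s, w s - u s ∈ (I ^ n • ⊤ : Submodule A (ι → A))) ∧
        ∀ s, f s - π (w s) ∈ I ^ (n + 1) • LinearMap.range π := by
    intro n u hu
    obtain ⟨v, hv⟩ := exists_continuous_lift_step hM π hc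
      ⟨fun s => f s - π (u s), f.continuous.sub (π.continuous_on_pi.comp u.continuous)⟩ hu
    exact ⟨u + v, fun s => by simpa using (hv s).1, fun s => by simpa [sub_sub] using (hv s).2⟩
  choose! next hnext using step
  let u : ℕ → C(S, ι → A) := fun n => Nat.rec 0 next n
  have hu : ∀ n s, f s - π (u n s) ∈ I ^ n • LinearMap.range π := by
    intro n
    induction n with
    | zero => simpa [u] using hf
    | succ n ih => exact (hnext n (u n) ih).2
  obtain ⟨g, hg⟩ := exists_continuous_adic_limit I
    (hasBasis_nhds_zero_pi_smul_top I fun _ => hA.hasBasis_nhds_zero_smul_top) u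
    fun n => (hnext n (u n) (hu n)).1
  refine ⟨g, fun s => (IsHausdorff.eq_iff_smodEq (I := I)).mpr fun n => SModEq.sub_mem.mpr ?_⟩
  rw [show π (g s) - f s = π (g s - u n s) - (f s - π (u n s)) by rw [map_sub]; abel]
  exact sub_mem (Submodule.smul_top_le_comap_smul_top _ π (hg n s))
    (Submodule.smul_mono le_rfl le_top (hu n s))

section CompLeftContinuous

variable {A ι S M : Type*} [CommRing A] [IsNoetherianRing A] [TopologicalSpace A]
  [IsTopologicalRing A] {I : Ideal A} [IsAdicComplete I A] [Finite ι] [TopologicalSpace S]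
  [AddCommGroup M] [Module A M] [Module.Finite A M] [TopologicalSpace M] [IsTopologicalAddGroup M]
  [ContinuousSMul A M]

theorem ContinuousLinearMap.compLeftContinuous_surjective (hA : IsAdic I)
    (hM : (𝓝 (0 : M)).HasBasis (fun _ : ℕ => True) fun n => ((I ^ n • ⊤ : Submodule A M) : Set M))
    {π : (ι → A) →L[A] M} (hπ : Function.Surjective π) :
    Function.Surjective (π.compLeftContinuous A S) := fun f =>
  let ⟨g, hg⟩ := exists_continuous_lift hA hM (π : (ι → A) →ₗ[A] M) f fun s =>
    LinearMap.mem_range.mpr (hπ (f s))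
  ⟨g, ContinuousMap.ext hg⟩

theorem Function.Exact.compLeftContinuous (hA : IsAdic I)
    (hM : (𝓝 (0 : M)).HasBasis (fun _ : ℕ => True) fun n => ((I ^ n • ⊤ : Submodule A M) : Set M))
    {N : Type*} [AddCommGroup N] [Module A N] [TopologicalSpace N] [IsTopologicalAddGroup N]
    [ContinuousSMul A N] {φ : (ι → A) →L[A] M} {ψ : M →L[A] N} (h : Function.Exact φ ψ) :
    Function.Exact (φ.compLeftContinuous A S) (ψ.compLeftContinuous A S) := by
  intro G
  constructor
  · intro hG
    obtain ⟨g, hg⟩ := exists_continuous_lift hA hM (φ : (ι → A) →ₗ[A] M) G fun s =>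
      LinearMap.mem_range.mpr ((h (G s)).mp (DFunLike.congr_fun hG s))
    exact ⟨g, ContinuousMap.ext hg⟩
  · rintro ⟨g, rfl⟩
    ext s
    exact h.apply_apply_eq_zero (g s)

end CompLeftContinuous

section cTensorMap

variable {S A : Type*} [TopologicalSpace S] [CommRing A] [TopologicalSpace A] [IsTopologicalRing A]

theorem compLeftContinuous_comp_cTensorMap {M N : Type*} [AddCommGroup M] [Module A M]
    [TopologicalSpace M] [IsTopologicalAddGroup M] [ContinuousSMul A M] [AddCommGroup N]
    [Module A N] [TopologicalSpace N] [IsTopologicalAddGroup N] [ContinuousSMul A N]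
    (φ : M →L[A] N) :
    (φ.compLeftContinuous A S : C(S, M) →ₗ[A] C(S, N)) ∘ₗ cTensorMap S A M =
      cTensorMap S A N ∘ₗ (φ : M →ₗ[A] N).lTensor C(S, A) := by
  ext f m s
  exact φ.map_smul (f s) m

variable (S A) in
theorem cTensorMap_pi_bijective (ι : Type*) [Finite ι] :
    Function.Bijective (cTensorMap S A (ι → A)) := by
  cases nonempty_fintype ι
  classical
  have h : ∀ x s i, cTensorMap S A (ι → A) x s i = piScalarRight A A C(S, A) ι x i s := by
    intro x s i
    induction x using TensorProduct.induction_on with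
    | zero => simp
    | tmul f a => simp [cTensorMap, mul_comm]
    | add x y hx hy => simp [hx, hy]
  have : ⇑(cTensorMap S A (ι → A)) =
      ContinuousMap.piEquiv S (fun _ : ι => A) ∘ piScalarRight A A C(S, A) ι := by
    ext x s i
    exact h x s i
  rw [this]
  exact (ContinuousMap.piEquiv S _).bijective.comp (piScalarRight A A C(S, A) ι).bijective

end cTensorMap

theorem cTensorMap_bijective
    (A : Type*) [CommRing A] [IsNoetherianRing A] [TopologicalSpace A] [IsTopologicalRing A]
    (I : Ideal A) (hA : IsAdic I) [IsAdicComplete I A]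
    (S : Type*) [TopologicalSpace S]
    (M : Type*) [AddCommGroup M] [Module A M] [Module.Finite A M]
    [TopologicalSpace M] [IsTopologicalAddGroup M] [ContinuousSMul A M]
    (hM : ∀ t : Set M, t ∈ nhds (0 : M) ↔ ∃ n : ℕ, ((I ^ n • ⊤ : Submodule A M) : Set M) ⊆ t) :
    Function.Bijective (cTensorMap S A M) := by
  obtain ⟨k, π, hπ⟩ := Module.Finite.exists_fin' A M
  obtain ⟨r, κ, hκ⟩ := Module.Finite.exists_fin' A (LinearMap.ker π)
  let πc : (Fin k → A) →L[A] M := ⟨π, π.continuous_on_pi⟩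
  let κc : (Fin r → A) →L[A] (Fin k → A) :=
    ⟨_, ((LinearMap.ker π).subtype ∘ₗ κ).continuous_on_pi⟩
  have hexact : Function.Exact κc πc :=
    hκ.comp_exact_iff_exact.mpr (LinearMap.exact_subtype_ker_map π)
  have hM_basis : (𝓝 (0 : M)).HasBasis (fun _ : ℕ => True)
      fun n => ((I ^ n • ⊤ : Submodule A M) : Set M) := ⟨fun t => (hM t).trans (by simp)⟩
  have hAk := hasBasis_nhds_zero_pi_smul_top I fun _ : Fin k => hA.hasBasis_nhds_zero_smul_top
  exact LinearMap.bijective_of_surjective_of_bijective_of_right_exact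
    ((κc : (Fin r → A) →ₗ[A] Fin k → A).lTensor C(S, A))
    ((πc : (Fin k → A) →ₗ[A] M).lTensor C(S, A))
    (κc.compLeftContinuous A S).toLinearMap (πc.compLeftContinuous A S).toLinearMap
    (cTensorMap S A _) (cTensorMap S A _) (cTensorMap S A M)
    (compLeftContinuous_comp_cTensorMap κc) (compLeftContinuous_comp_cTensorMap πc)
    (lTensor_exact _ hexact hπ) (hexact.compLeftContinuous hA hAk)
    (cTensorMap_pi_bijective S A (Fin r)).2 (cTensorMap_pi_bijective S A (Fin k))
    (LinearMap.lTensor_surjective _ hπ)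
    (ContinuousLinearMap.compLeftContinuous_surjective hA hM_basis hπ)
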